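/- arXiv:2111.13447 — 2 statements merged into one kernel-verified Lean document; each statement's English description precedes it below -/
import Mathlib

section
/- Let U be a finite set, T a left-continuous t-norm, R : U × U → [0,1] a reflexive and T-transitive fuzzy relation, and A : U → [0,1] a fuzzy set. Define the upper approximation Apr(A)(u) = max over v ∈ U of T(R(u,v), A(v)). Then Apr(A) is the smallest granularly representable fuzzy set containing A; that is: (1) A(u) ≤ Apr(A)(u) for all u; (2) T(R(v,u), Apr(A)(u)) ≤ Apr(A)(v) for all u, v; and (3) any granularly representable fuzzy set B with A ≤ B pointwise satisfies Apr(A) ≤ B pointwise. -/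
open Set

/-- A t-norm on the unit interval (modeled as a real binary operation whose
relevant properties hold on `[0,1]`). -/
def IsTNorm (T : ℝ → ℝ → ℝ) : Prop :=
  (∀ x ∈ Icc (0:ℝ) 1, ∀ y ∈ Icc (0:ℝ) 1, T x y ∈ Icc (0:ℝ) 1) ∧
  (∀ x y : ℝ, T x y = T y x) ∧
  (∀ x y z : ℝ, T (T x y) z = T x (T y z)) ∧
  (∀ x ∈ Icc (0:ℝ) 1, ∀ y ∈ Icc (0:ℝ) 1, ∀ z ∈ Icc (0:ℝ) 1, y ≤ z → T x y ≤ T x z) ∧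
  (∀ x ∈ Icc (0:ℝ) 1, T x 1 = x)

/-- Left continuity of a t-norm (in each argument; by commutativity it suffices
to require it in the second argument). -/
def LeftContinuousTNorm (T : ℝ → ℝ → ℝ) : Prop :=
  ∀ x ∈ Icc (0:ℝ) 1, ∀ y ∈ Icc (0:ℝ) 1, ContinuousWithinAt (fun z => T x z) (Iic y) y

/-- The residual implicator `I(x,y) = sup {λ ∈ [0,1] : T(x,λ) ≤ y}`. -/
noncomputable def resImp (T : ℝ → ℝ → ℝ) (x y : ℝ) : ℝ :=
  sSup {l : ℝ | l ∈ Icc (0:ℝ) 1 ∧ T x l ≤ y}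

/-! Reflexivity of `R` gives `A ≤ Apr A`. Since `U` is finite, the supremum defining `Apr A u`
is attained at some `w`, and associativity plus `T`-transitivity give
`T (R v u) (T (R u w) (A w)) ≤ T (R v w) (A w) ≤ Apr A v`. Minimality follows from
monotonicity of `T` and granularity of `B`. -/

namespace IsTNorm

variable {T : ℝ → ℝ → ℝ}

theorem one_left (hT : IsTNorm T) {x : ℝ} (hx : x ∈ Icc (0:ℝ) 1) : T 1 x = x := by
  rw [hT.2.1]
  exact hT.2.2.2.2 x hx

theorem mono_left (hT : IsTNorm T) {x y z : ℝ} (hx : x ∈ Icc (0:ℝ) 1) (hy : y ∈ Icc (0:ℝ) 1)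
    (hz : z ∈ Icc (0:ℝ) 1) (hxy : x ≤ y) : T x z ≤ T y z := by
  rw [hT.2.1 x, hT.2.1 y]
  exact hT.2.2.2.1 z hz x hx y hy hxy

end IsTNorm

section UpperApprox

variable {U : Type*} {T : ℝ → ℝ → ℝ} {R : U → U → ℝ} {A : U → ℝ}

def IsGranular (T : ℝ → ℝ → ℝ) (R : U → U → ℝ) (B : U → ℝ) : Prop :=
  ∀ u v, T (R v u) (B u) ≤ B v

noncomputable def upperApprox (T : ℝ → ℝ → ℝ) (R : U → U → ℝ) (A : U → ℝ) (u : U) : ℝ :=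
  ⨆ v, T (R u v) (A v)

theorem le_upperApprox [Finite U] (u w : U) : T (R u w) (A w) ≤ upperApprox T R A u :=
  le_ciSup (f := fun v => T (R u v) (A v)) (finite_range _).bddAbove w

theorem self_le_upperApprox [Finite U] (hT : IsTNorm T) (hRrefl : ∀ u, R u u = 1) {u : U}
    (hA : A u ∈ Icc (0:ℝ) 1) : A u ≤ upperApprox T R A u :=
  calc A u = T (R u u) (A u) := by rw [hRrefl, hT.one_left hA]
    _ ≤ upperApprox T R A u := le_upperApprox u u

theorem exists_upperApprox_eq [Finite U] (u : U) :
    ∃ w, upperApprox T R A u = T (R u w) (A w) := by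
  have : Nonempty U := ⟨u⟩
  obtain ⟨w, hw⟩ := Finite.exists_max fun w => T (R u w) (A w)
  exact ⟨w, le_antisymm (ciSup_le hw) (le_upperApprox u w)⟩

theorem isGranular_upperApprox [Finite U] (hT : IsTNorm T) (hR : ∀ u v, R u v ∈ Icc (0:ℝ) 1)
    (hRtrans : ∀ u v w, T (R u v) (R v w) ≤ R u w) (hA : ∀ u, A u ∈ Icc (0:ℝ) 1) :
    IsGranular T R (upperApprox T R A) := by
  intro u v
  obtain ⟨w, hw⟩ := exists_upperApprox_eq (T := T) (R := R) (A := A) u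
  calc T (R v u) (upperApprox T R A u) = T (T (R v u) (R u w)) (A w) := by rw [hw, hT.2.2.1]
    _ ≤ T (R v w) (A w) :=
      hT.mono_left (hT.1 _ (hR v u) _ (hR u w)) (hR v w) (hA w) (hRtrans v u w)
    _ ≤ upperApprox T R A v := le_upperApprox v w

theorem upperApprox_le_of_isGranular (hT : IsTNorm T) (hR : ∀ u v, R u v ∈ Icc (0:ℝ) 1)
    (hA : ∀ u, A u ∈ Icc (0:ℝ) 1) {B : U → ℝ} (hB : ∀ u, B u ∈ Icc (0:ℝ) 1)
    (hBgr : IsGranular T R B) (hAB : ∀ u, A u ≤ B u) (u : U) : upperApprox T R A u ≤ B u :=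
  have : Nonempty U := ⟨u⟩
  ciSup_le fun v => (hT.2.2.2.1 _ (hR u v) _ (hA v) _ (hB v) (hAB v)).trans (hBgr v u)

end UpperApprox

theorem upper_approximation_smallest_granular_general
    (U : Type*) [Fintype U]
    (T : ℝ → ℝ → ℝ) (hT : IsTNorm T)
    (R : U → U → ℝ) (hR : ∀ u v, R u v ∈ Icc (0:ℝ) 1)
    (hRrefl : ∀ u, R u u = 1)
    (hRtrans : ∀ u v w, T (R u v) (R v w) ≤ R u w)
    (A : U → ℝ) (hA : ∀ u, A u ∈ Icc (0:ℝ) 1)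
    (Apr : U → ℝ) (hApr : ∀ u, Apr u = ⨆ v, T (R u v) (A v)) :
    (∀ u, A u ≤ Apr u) ∧
    (∀ u v, T (R v u) (Apr u) ≤ Apr v) ∧
    (∀ B : U → ℝ, (∀ u, B u ∈ Icc (0:ℝ) 1) →
      (∀ u v, T (R v u) (B u) ≤ B v) → (∀ u, A u ≤ B u) → ∀ u, Apr u ≤ B u) := by
  obtain rfl : Apr = upperApprox T R A := funext hApr
  exact ⟨fun u => self_le_upperApprox hT hRrefl (hA u), isGranular_upperApprox hT hR hRtrans hA,
    fun _ hB hBgr hAB => upperApprox_le_of_isGranular hT hR hA hB hBgr hAB⟩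

theorem upper_approximation_smallest_granular
    (U : Type*) [Fintype U] [Nonempty U]
    (T : ℝ → ℝ → ℝ) (hT : IsTNorm T) (hLC : LeftContinuousTNorm T)
    (R : U → U → ℝ) (hR : ∀ u v, R u v ∈ Icc (0:ℝ) 1)
    (hRrefl : ∀ u, R u u = 1)
    (hRtrans : ∀ u v w, T (R u v) (R v w) ≤ R u w)
    (A : U → ℝ) (hA : ∀ u, A u ∈ Icc (0:ℝ) 1)
    (Apr : U → ℝ) (hApr : ∀ u, Apr u = ⨆ v, T (R u v) (A v)) :
    (∀ u, A u ≤ Apr u) ∧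
    (∀ u v, T (R v u) (Apr u) ≤ Apr v) ∧
    (∀ B : U → ℝ, (∀ u, B u ∈ Icc (0:ℝ) 1) →
      (∀ u v, T (R v u) (B u) ≤ B v) → (∀ u, A u ≤ B u) → ∀ u, Apr u ≤ B u) :=
  upper_approximation_smallest_granular_general U T hT R hR hRrefl hRtrans A hA Apr hApr
end

section
/- Let T be a left-continuous t-norm with residual implicator I, and suppose the induced negator N(x) = I(x,0) is involutive. Let U be a finite set, R a fuzzy relation on U, and A : U → [0,1]. Then A is granularly representable w.r.t. T and R if and only if coA, defined by coA(u) = N(A(u)), is granularly representable w.r.t. T and R⁻¹, where R⁻¹(u,v) = R(v,u). -/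
/-! With `N c = resImp T c 0`, left continuity gives `T(c, N c) = 0`, so by associativity and
monotonicity `T(a,b) ≤ c` implies `T(a, N c) ≤ N b`. Applied to `R(u,v), A(v), A(u)` this yields
one direction; applied to the complements, `N ∘ N = id` yields the other. -/

open Set

namespace IsTNorm

variable {T : ℝ → ℝ → ℝ}

lemma apply_zero (hT : IsTNorm T) {x : ℝ} (hx : x ∈ Icc (0:ℝ) 1) : T x 0 = 0 := by
  obtain ⟨hBound, hComm, -, hMono, hOne⟩ := hT
  have h01 : (0:ℝ) ∈ Icc (0:ℝ) 1 := ⟨le_rfl, zero_le_one⟩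
  have hle : T 0 x ≤ T 0 1 := hMono 0 h01 x hx 1 ⟨zero_le_one, le_rfl⟩ hx.2
  have hnonneg : 0 ≤ T 0 x := (hBound 0 h01 x hx).1
  rw [hComm]
  linarith [hOne 0 h01]

lemma zero_mem_resImp_set (hT : IsTNorm T) {x y : ℝ} (hx : x ∈ Icc (0:ℝ) 1) (hy : 0 ≤ y) :
    (0:ℝ) ∈ {l : ℝ | l ∈ Icc (0:ℝ) 1 ∧ T x l ≤ y} :=
  ⟨⟨le_rfl, zero_le_one⟩, (hT.apply_zero hx).trans_le hy⟩

end IsTNorm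

section resImp

variable {T : ℝ → ℝ → ℝ}

lemma bddAbove_resImp_set (x y : ℝ) : BddAbove {l : ℝ | l ∈ Icc (0:ℝ) 1 ∧ T x l ≤ y} :=
  ⟨1, fun _ hl => hl.1.2⟩

lemma le_resImp {x y l : ℝ} (hl : l ∈ Icc (0:ℝ) 1) (h : T x l ≤ y) : l ≤ resImp T x y :=
  le_csSup (bddAbove_resImp_set x y) ⟨hl, h⟩

lemma resImp_mem_Icc (hT : IsTNorm T) {x y : ℝ} (hx : x ∈ Icc (0:ℝ) 1) (hy : 0 ≤ y) :
    resImp T x y ∈ Icc (0:ℝ) 1 :=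
  ⟨le_resImp ⟨le_rfl, zero_le_one⟩ ((hT.apply_zero hx).trans_le hy),
    csSup_le ⟨0, hT.zero_mem_resImp_set hx hy⟩ fun _ hl => hl.1.2⟩

/-- Left continuity is what makes the supremum defining `resImp` attained. -/
lemma apply_resImp_le (hT : IsTNorm T) (hLC : LeftContinuousTNorm T) {x y : ℝ}
    (hx : x ∈ Icc (0:ℝ) 1) (hy : 0 ≤ y) : T x (resImp T x y) ≤ y := by
  set S := {l : ℝ | l ∈ Icc (0:ℝ) 1 ∧ T x l ≤ y}
  have hbdd : BddAbove S := bddAbove_resImp_set x y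
  have hclosure : sSup S ∈ closure S := csSup_mem_closure ⟨0, hT.zero_mem_resImp_set hx hy⟩ hbdd
  have hcont : ContinuousWithinAt (T x) S (sSup S) :=
    (hLC x hx _ (resImp_mem_Icc hT hx hy)).mono fun _ hl => le_csSup hbdd hl
  have : (nhdsWithin (sSup S) S).NeBot := mem_closure_iff_nhdsWithin_neBot.mp hclosure
  exact le_of_tendsto hcont (Filter.eventually_of_mem self_mem_nhdsWithin fun _ hl => hl.2)

lemma apply_resImp_zero_le_of_apply_le (hT : IsTNorm T) (hLC : LeftContinuousTNorm T)
    {a b c : ℝ} (ha : a ∈ Icc (0:ℝ) 1) (hb : b ∈ Icc (0:ℝ) 1) (hc : c ∈ Icc (0:ℝ) 1)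
    (h : T a b ≤ c) : T a (resImp T c 0) ≤ resImp T b 0 := by
  have hNc := resImp_mem_Icc hT hc le_rfl
  have hcNc := apply_resImp_le hT hLC hc le_rfl
  obtain ⟨hBound, hComm, hAssoc, hMono, -⟩ := hT
  refine le_resImp (hBound a ha _ hNc) ?_
  calc T b (T a (resImp T c 0)) = T (resImp T c 0) (T a b) := by
        rw [← hAssoc, hComm (T b a), hComm b a]
    _ ≤ T (resImp T c 0) c := hMono _ hNc _ (hBound a ha b hb) c hc h
    _ = T c (resImp T c 0) := hComm _ _
    _ ≤ 0 := hcNc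

end resImp

theorem granular_complement_iff_general
    (U : Type*)
    (T : ℝ → ℝ → ℝ) (hT : IsTNorm T) (hLC : LeftContinuousTNorm T)
    (hNinv : ∀ x ∈ Icc (0:ℝ) 1, resImp T (resImp T x 0) 0 = x)
    (R : U → U → ℝ) (hR : ∀ u v, R u v ∈ Icc (0:ℝ) 1)
    (A : U → ℝ) (hA : ∀ u, A u ∈ Icc (0:ℝ) 1) :
    (∀ u v : U, T (R u v) (A v) ≤ A u) ↔
      (∀ u v : U, T (R v u) (resImp T (A v) 0) ≤ resImp T (A u) 0) := by
  have hNA u : resImp T (A u) 0 ∈ Icc (0:ℝ) 1 := resImp_mem_Icc hT (hA u) le_rfl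
  refine ⟨fun h u v => ?_, fun h u v => ?_⟩
  · exact apply_resImp_zero_le_of_apply_le hT hLC (hR v u) (hA u) (hA v) (h v u)
  · have := apply_resImp_zero_le_of_apply_le hT hLC (hR u v) (hNA u) (hNA v) (h v u)
    rwa [hNinv (A v) (hA v), hNinv (A u) (hA u)] at this

theorem granular_complement_iff
    (U : Type*) [Fintype U]
    (T : ℝ → ℝ → ℝ) (hT : IsTNorm T) (hLC : LeftContinuousTNorm T)
    (hNinv : ∀ x ∈ Icc (0:ℝ) 1, resImp T (resImp T x 0) 0 = x)
    (R : U → U → ℝ) (hR : ∀ u v, R u v ∈ Icc (0:ℝ) 1)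
    (A : U → ℝ) (hA : ∀ u, A u ∈ Icc (0:ℝ) 1) :
    (∀ u v : U, T (R u v) (A v) ≤ A u) ↔
      (∀ u v : U, T (R v u) (resImp T (A v) 0) ≤ resImp T (A u) 0) :=
  granular_complement_iff_general U T hT hLC hNinv R hR A hA
end
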